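/- arXiv:0901.0834 — 2 statements merged into one kernel-verified Lean document; each statement's English description precedes it below -/
import Mathlib

section
/- (Converse) Consider a channel with finite input alphabet X, finite output alphabet Y, and channel law P_{Y|X}. If an (m,ε)-code exists (an encoder f : {1,…,m} → X and decoder g : Y → {1,…,m} with average error probability at most ε under a uniform message), then log₂ m ≤ sup_{P_X} D₀^ε(P_{XY} ‖ P_X × P_Y), where the supremum is over probability distributions P_X on X, P_{XY}(x,y) = P_X(x) P_{Y|X}(y|x), and P_Y is the corresponding output marginal. -/
open scoped BigOperators Classical

/-- `-log₂ s` with the convention `-log₂ 0 = +∞`, valued in the extended reals. -/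
noncomputable def negLog2 (s : ℝ) : EReal :=
  if s = 0 then ⊤ else ((-Real.logb 2 s : ℝ) : EReal)

/-- `P` is a probability mass function on the finite set `Ω`. -/
def IsPmf {Ω : Type*} [Fintype Ω] (P : Ω → ℝ) : Prop :=
  (∀ x, 0 ≤ P x) ∧ ∑ x, P x = 1

/-- The smooth `0`-divergence
`D₀^δ(P‖Q) = sup { -log₂ (∑_x Φ x * Q x) : Φ : Ω → [0,1], ∑_x Φ x * P x ≥ 1 - δ }`. -/
noncomputable def D0smooth {Ω : Type*} [Fintype Ω] (P Q : Ω → ℝ) (δ : ℝ) : EReal :=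
  sSup { r : EReal | ∃ Φ : Ω → ℝ, (∀ x, 0 ≤ Φ x ∧ Φ x ≤ 1) ∧
    1 - δ ≤ ∑ x, Φ x * P x ∧ r = negLog2 (∑ x, Φ x * Q x) }

/-- Rényi's divergence of order `0`: `D₀(P‖Q) = -log₂ (∑_{x : P x > 0} Q x)`. -/
noncomputable def D0 {Ω : Type*} [Fintype Ω] (P Q : Ω → ℝ) : EReal :=
  negLog2 (∑ x ∈ Finset.univ.filter (fun x => 0 < P x), Q x)

/-!
Send a uniformly distributed message `M` through the encoder, and let `P_X` be the law of
`f M`. The test `Φ(x, y) = P(M = g y | f M = x)` has `P_{XY}`-mass equal to the success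
probability of the code, hence at least `1 - ε`, while under `P_X × P_Y` it has mass
`P(M = g Y')` for an output `Y'` independent of `M`, which is exactly `1 / m`.
-/

open Finset

section Divergence

variable {Ω : Type*} [Fintype Ω]

theorem negLog2_inv {s : ℝ} (hs : 0 < s) : negLog2 s⁻¹ = Real.logb 2 s := by
  rw [negLog2, if_neg (inv_ne_zero hs.ne'), Real.logb_inv, neg_neg]

theorem negLog2_le_D0smooth {P Q : Ω → ℝ} {δ : ℝ} (Φ : Ω → ℝ)
    (hΦ : ∀ x, 0 ≤ Φ x ∧ Φ x ≤ 1) (hP : 1 - δ ≤ ∑ x, Φ x * P x) :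
    negLog2 (∑ x, Φ x * Q x) ≤ D0smooth P Q δ :=
  le_sSup ⟨Φ, hΦ, hP, rfl⟩

end Divergence

section Channel

variable {X Y : Type*} [Fintype X] [Fintype Y]

theorem sum_outputMarginal {P : X → ℝ} {W : X → Y → ℝ} (hP : ∑ x, P x = 1)
    (hW : ∀ x, ∑ y, W x y = 1) : ∑ y, ∑ x, P x * W x y = 1 := by
  rw [sum_comm]
  simp_rw [← mul_sum, hW, mul_one, hP]

theorem sum_apply_decoder_eq {ι : Type*} [Fintype ι] [DecidableEq ι] (V : ι → Y → ℝ)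
    (hV : ∀ i, ∑ y, V i y = 1) (g : Y → ι) :
    ∑ y, V (g y) y = Fintype.card ι - ∑ i, ∑ y ∈ univ.filter (g · ≠ i), V i y := by
  have hcorrect : ∑ i, ∑ y ∈ univ.filter (fun y => g y = i), V i y = ∑ y, V (g y) y := by
    rw [← sum_fiberwise univ g fun y => V (g y) y]
    refine sum_congr rfl fun i _ => sum_congr rfl fun y hy => ?_
    rw [(mem_filter.mp hy).2]
  have hsplit : ∑ i, (∑ y ∈ univ.filter (fun y => g y = i), V i y
      + ∑ y ∈ univ.filter (fun y => g y ≠ i), V i y) = Fintype.card ι := by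
    simp [sum_filter_add_sum_filter_not, hV]
  rw [sum_add_distrib, hcorrect] at hsplit
  linarith

end Channel

section Code

variable {ι X Y : Type*} [Fintype ι]

noncomputable def uniformPushforward (f : ι → X) (x : X) : ℝ :=
  #{i | f i = x} / Fintype.card ι

theorem isPmf_uniformPushforward [Fintype X] [Nonempty ι] (f : ι → X) :
    IsPmf (uniformPushforward f) := by
  refine ⟨fun x => by unfold uniformPushforward; positivity, ?_⟩
  simp_rw [uniformPushforward, ← sum_div]
  rw [div_eq_one_iff_eq (by positivity)]
  exact_mod_cast (card_eq_sum_card_fiberwise fun i _ => mem_univ (f i)).symm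

noncomputable def decoderTest (f : ι → X) (g : Y → ι) (q : X × Y) : ℝ :=
  if f (g q.2) = q.1 then (#{i | f i = q.1} : ℝ)⁻¹ else 0

theorem card_fiber_comp_pos (f : ι → X) (g : Y → ι) (y : Y) :
    (0 : ℝ) < #{i | f i = f (g y)} := by
  exact_mod_cast card_pos.mpr ⟨g y, by simp⟩

theorem decoderTest_mem_unitInterval (f : ι → X) (g : Y → ι) (q : X × Y) :
    0 ≤ decoderTest f g q ∧ decoderTest f g q ≤ 1 := by
  unfold decoderTest
  split_ifs with h
  · refine ⟨by positivity, inv_le_one_of_one_le₀ ?_⟩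
    exact_mod_cast h ▸ card_fiber_comp_pos f g q.2
  · exact ⟨le_rfl, zero_le_one⟩

theorem decoderTest_mul_uniformPushforward (f : ι → X) (g : Y → ι) (q : X × Y) :
    decoderTest f g q * uniformPushforward f q.1
      = if f (g q.2) = q.1 then (Fintype.card ι : ℝ)⁻¹ else 0 := by
  unfold decoderTest uniformPushforward
  split_ifs with h
  · have := h ▸ card_fiber_comp_pos f g q.2
    field_simp
  · exact zero_mul _

theorem sum_decoderTest_mul [Fintype X] [Fintype Y] (f : ι → X) (g : Y → ι)
    (A : X → Y → ℝ) :
    ∑ q : X × Y, decoderTest f g q * (uniformPushforward f q.1 * A q.1 q.2)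
      = (Fintype.card ι : ℝ)⁻¹ * ∑ y, A (f (g y)) y := by
  simp only [Fintype.sum_prod_type_right, ← mul_assoc, decoderTest_mul_uniformPushforward,
    ite_mul, zero_mul, sum_ite_eq, mem_univ, if_true, mul_sum]

end Code

theorem channel_coding_converse_general {X Y : Type*} [Fintype X] [Fintype Y]
    (W : X → Y → ℝ) (hW : ∀ x, IsPmf (W x))
    (m : ℕ) (hm : 1 ≤ m) (ε : ℝ)
    (f : Fin m → X) (g : Y → Fin m)
    (hcode : (1 / m : ℝ) * ∑ i : Fin m,
        ∑ y ∈ Finset.univ.filter (fun y => g y ≠ i), W (f i) y ≤ ε) :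
    (Real.logb 2 m : EReal)
      ≤ ⨆ PX : { p : X → ℝ // IsPmf p },
          D0smooth (fun q : X × Y => PX.1 q.1 * W q.1 q.2)
            (fun q : X × Y => PX.1 q.1 * ∑ x, PX.1 x * W x q.2) ε := by
  have : NeZero m := ⟨by omega⟩
  have hm' : (0 : ℝ) < m := by exact_mod_cast hm
  have hsuccess :
      1 - ε ≤ ∑ q : X × Y, decoderTest f g q * (uniformPushforward f q.1 * W q.1 q.2) := by
    rw [sum_decoderTest_mul, sum_apply_decoder_eq (fun i => W (f i)) (fun i => (hW (f i)).2),
      Fintype.card_fin, mul_sub, inv_mul_cancel₀ hm'.ne']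
    rw [one_div] at hcode
    linarith
  have hindependent : ∑ q : X × Y, decoderTest f g q *
      (uniformPushforward f q.1 * ∑ x, uniformPushforward f x * W x q.2) = (m : ℝ)⁻¹ := by
    rw [sum_decoderTest_mul f g fun _ y => ∑ x, uniformPushforward f x * W x y,
      sum_outputMarginal (isPmf_uniformPushforward f).2 fun x => (hW x).2,
      Fintype.card_fin, mul_one]
  rw [← negLog2_inv hm', ← hindependent]
  exact le_iSup_of_le ⟨_, isPmf_uniformPushforward f⟩
    (negLog2_le_D0smooth _ (decoderTest_mem_unitInterval f g) hsuccess)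

/-- Converse: any `(m,ε)`-code for a channel `P_{Y|X}` satisfies
`log₂ m ≤ sup_{P_X} D₀^ε(P_{XY} ‖ P_X × P_Y)`. -/
theorem channel_coding_converse {X Y : Type*} [Fintype X] [Fintype Y]
    (W : X → Y → ℝ) (hW : ∀ x, IsPmf (W x))
    (m : ℕ) (hm : 1 ≤ m) (ε : ℝ) (hε0 : 0 ≤ ε) (hε1 : ε < 1)
    (f : Fin m → X) (g : Y → Fin m)
    (hcode : (1 / m : ℝ) * ∑ i : Fin m,
        ∑ y ∈ Finset.univ.filter (fun y => g y ≠ i), W (f i) y ≤ ε) :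
    (Real.logb 2 m : EReal)
      ≤ ⨆ PX : { p : X → ℝ // IsPmf p },
          D0smooth (fun q : X × Y => PX.1 q.1 * W q.1 q.2)
            (fun q : X × Y => PX.1 q.1 * ∑ x, PX.1 x * W x q.2) ε :=
  channel_coding_converse_general W hW m hm ε f g hcode
end

section
/- (Capacity upper bound from converse) With the same setup, the capacity satisfies C ≤ lim_{ε↓0} liminf_{n→∞} (1/n) sup_{P_{X^n}} D₀^ε(P_{X^nY^n} ‖ P_{X^n} × P_{Y^n}). -/
open scoped BigOperators Classical

open Filter

/-- `sup_{P_X} D₀^ε(P_{XY} ‖ P_X × P_Y)` for a channel `W` from `A` to `B`. -/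
noncomputable def supD0 {A B : Type*} [Fintype A] [Fintype B]
    (W : A → B → ℝ) (ε : ℝ) : EReal :=
  ⨆ PX : { p : A → ℝ // IsPmf p },
    D0smooth (fun q : A × B => PX.1 q.1 * W q.1 q.2)
      (fun q : A × B => PX.1 q.1 * ∑ a, PX.1 a * W a q.2) ε

/-- Existence of an `(M,ε)`-code (average error probability at most `ε`)
for the channel `W` from `A` to `B`. -/
def IsCode {A B : Type*} [Fintype A] [Fintype B] (W : A → B → ℝ) (M : ℕ) (ε : ℝ) : Prop :=
  ∃ (f : Fin M → A) (g : B → Fin M),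
    (1 / M : ℝ) * ∑ i : Fin M,
      ∑ y ∈ Finset.univ.filter (fun y => g y ≠ i), W (f i) y ≤ ε

/-! A code `(f, g)` with `M` messages yields a hypothesis test for `D₀^ε`: feed the channel the
input distribution of `f` under a uniform message, and accept `(a, b)` with probability
`1 / #f⁻¹(a)` when `f (g b) = a`. Under the joint law this test succeeds with probability equal to
the success probability `1 - ε` of the code, while under the product law it succeeds with
probability exactly `1 / M`; hence `log₂ M ≤ D₀^ε`. Dividing by `n` and taking `liminf` along codes
of rate at least `R` whose errors eventually drop below any `ε > 0` gives the bound. -/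

open Finset

lemma negLog2_one_div {x : ℝ} (hx : x ≠ 0) : negLog2 (1 / x) = ((Real.logb 2 x : ℝ) : EReal) := by
  rw [negLog2, if_neg (one_div_ne_zero hx), one_div, Real.logb_inv, neg_neg]

lemma le_D0smooth {Ω : Type*} [Fintype Ω] {P Q Φ : Ω → ℝ} {δ : ℝ}
    (hΦ : ∀ x, 0 ≤ Φ x ∧ Φ x ≤ 1) (hP : 1 - δ ≤ ∑ x, Φ x * P x) :
    negLog2 (∑ x, Φ x * Q x) ≤ D0smooth P Q δ :=
  le_sSup ⟨Φ, hΦ, hP, rfl⟩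

lemma D0smooth_le_supD0 {A B : Type*} [Fintype A] [Fintype B] (W : A → B → ℝ) (ε : ℝ)
    {PX : A → ℝ} (hPX : IsPmf PX) :
    D0smooth (fun q : A × B => PX q.1 * W q.1 q.2)
      (fun q : A × B => PX q.1 * ∑ a, PX a * W a q.2) ε ≤ supD0 W ε :=
  le_iSup_of_le (⟨PX, hPX⟩ : { p : A → ℝ // IsPmf p }) le_rfl

lemma IsCode.mono {A B : Type*} [Fintype A] [Fintype B] {W : A → B → ℝ} {M : ℕ} {ε ε' : ℝ}
    (h : IsCode W M ε) (hε : ε ≤ ε') : IsCode W M ε' :=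
  let ⟨f, g, herr⟩ := h
  ⟨f, g, herr.trans hε⟩

namespace Code

variable {A B : Type*} {M : ℕ} (f : Fin M → A) (g : B → Fin M)

noncomputable def inputDist (a : A) : ℝ :=
  #{i | f i = a} / M

noncomputable def decodingTest (q : A × B) : ℝ :=
  if f (g q.2) = q.1 then 1 / #{i | f i = q.1} else 0

lemma isPmf_inputDist [Fintype A] (hM : 0 < M) : IsPmf (inputDist f) := by
  refine ⟨fun a => by unfold inputDist; positivity, ?_⟩
  have hfibers : ∑ a, (#{i | f i = a} : ℝ) = M := by
    exact_mod_cast (card_eq_sum_card_fiberwise fun i _ => mem_univ (f i)).symm.trans (card_fin M)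
  simp only [inputDist, ← sum_div, hfibers]
  exact div_self (by positivity)

lemma card_fiber_decode_pos (b : B) : 0 < #{i | f i = f (g b)} :=
  card_pos.2 ⟨g b, by simp⟩

lemma decodingTest_mem_unitInterval (q : A × B) :
    0 ≤ decodingTest f g q ∧ decodingTest f g q ≤ 1 := by
  unfold decodingTest
  split_ifs with h
  · have hpos : (1 : ℝ) ≤ #{i | f i = q.1} := by
      exact_mod_cast h ▸ card_fiber_decode_pos f g q.2
    exact ⟨by positivity, div_le_one_of_le₀ hpos (by positivity)⟩
  · exact ⟨le_rfl, zero_le_one⟩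

/-- For fixed output `b`, the test only sees the codeword `f (g b)`, whose fiber weight cancels
against the input distribution. -/
lemma sum_decodingTest_mul_inputDist [Fintype A] (V : A → B → ℝ) (b : B) :
    ∑ a, decodingTest f g (a, b) * (inputDist f a * V a b) = V (f (g b)) b / M := by
  have hfiber : (#{i | f i = f (g b)} : ℝ) ≠ 0 := by
    exact_mod_cast (card_fiber_decode_pos f g b).ne'
  simp only [decodingTest, inputDist, ite_mul, zero_mul, sum_ite_eq, mem_univ, if_true]
  field_simp

lemma sum_decodingTest_mul_joint [Fintype A] [Fintype B] (W : A → B → ℝ) :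
    ∑ q : A × B, decodingTest f g q * (inputDist f q.1 * W q.1 q.2) =
      (∑ b, W (f (g b)) b) / M := by
  rw [Fintype.sum_prod_type, sum_comm, sum_div]
  exact sum_congr rfl fun b _ => sum_decodingTest_mul_inputDist f g W b

lemma sum_decodingTest_mul_product [Fintype A] [Fintype B] {W : A → B → ℝ} (hW : ∀ a, IsPmf (W a)) (hM : 0 < M) :
    ∑ q : A × B, decodingTest f g q * (inputDist f q.1 * ∑ a, inputDist f a * W a q.2) =
      1 / M := by
  have houtput : ∑ b, ∑ a, inputDist f a * W a b = 1 := by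
    rw [sum_comm]
    simp only [← mul_sum, (hW _).2, mul_one, (isPmf_inputDist f hM).2]
  rw [Fintype.sum_prod_type, sum_comm, ← houtput, sum_div]
  exact sum_congr rfl fun b _ =>
    sum_decodingTest_mul_inputDist f g (fun _ b => ∑ a, inputDist f a * W a b) b

lemma sum_decode_eq_one_sub_error [Fintype B] {W : A → B → ℝ} (hW : ∀ a, IsPmf (W a)) (hM : 0 < M) :
    (∑ b, W (f (g b)) b) / M =
      1 - (1 / M : ℝ) * ∑ i : Fin M, ∑ y ∈ univ.filter (fun y => g y ≠ i), W (f i) y := by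
  have hsplit : ∀ i : Fin M, ∑ y ∈ univ.filter (fun y => g y = i), W (f i) y =
      1 - ∑ y ∈ univ.filter (fun y => g y ≠ i), W (f i) y := fun i => by
    rw [← (hW (f i)).2, ← sum_filter_add_sum_filter_not univ (fun y => g y = i)]
    ring
  have hcorrect : ∑ b, W (f (g b)) b =
      ∑ i : Fin M, ∑ y ∈ univ.filter (fun y => g y = i), W (f i) y := by
    rw [← sum_fiberwise univ g]
    exact sum_congr rfl fun i _ => sum_congr rfl fun y hy => by rw [(mem_filter.1 hy).2]
  have hM' : (M : ℝ) ≠ 0 := by positivity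
  rw [hcorrect, sum_congr rfl fun i _ => hsplit i, sum_sub_distrib]
  simp only [sum_const, card_univ, Fintype.card_fin, nsmul_eq_mul, mul_one]
  field_simp

end Code

theorem logb_le_supD0_of_isCode {A B : Type*} [Fintype A] [Fintype B] {W : A → B → ℝ}
    (hW : ∀ a, IsPmf (W a)) {M : ℕ} (hM : 0 < M) {ε : ℝ} (hcode : IsCode W M ε) :
    ((Real.logb 2 M : ℝ) : EReal) ≤ supD0 W ε := by
  obtain ⟨f, g, herr⟩ := hcode
  have hsuccess : 1 - ε ≤ ∑ q : A × B,
      Code.decodingTest f g q * (Code.inputDist f q.1 * W q.1 q.2) := by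
    rw [Code.sum_decodingTest_mul_joint, Code.sum_decode_eq_one_sub_error f g hW hM]
    linarith
  calc ((Real.logb 2 M : ℝ) : EReal)
      = negLog2 (∑ q : A × B, Code.decodingTest f g q *
          (Code.inputDist f q.1 * ∑ a, Code.inputDist f a * W a q.2)) := by
        rw [Code.sum_decodingTest_mul_product f g hW hM, negLog2_one_div (by positivity)]
    _ ≤ _ := le_D0smooth (Code.decodingTest_mem_unitInterval f g) hsuccess
    _ ≤ supD0 W ε := D0smooth_le_supD0 W ε (Code.isPmf_inputDist f hM)

/-- Capacity upper bound: any rate `R` achievable with vanishing error probability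
satisfies `R ≤ lim_{ε↓0} liminf_n (1/n)·sup_{P_{Xⁿ}} D₀^ε(P_{XⁿYⁿ}‖P_{Xⁿ}×P_{Yⁿ})`. -/
theorem capacity_upper_bound {X Y : Type*} [Fintype X] [Fintype Y]
    (C : ∀ n : ℕ, (Fin n → X) → (Fin n → Y) → ℝ)
    (hC : ∀ n xs, IsPmf (C n xs)) (R : ℝ)
    (M : ℕ → ℕ) (e : ℕ → ℝ)
    (hcodes : ∀ n, 1 ≤ n → 1 ≤ M n ∧ IsCode (C n) (M n) (e n) ∧
        R ≤ (1 / (n:ℝ)) * Real.logb 2 (M n))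
    (he : Tendsto e atTop (nhds 0)) :
    (R : EReal) ≤ ⨅ (ε : ℝ) (_ : 0 < ε),
        liminf (fun n : ℕ => ((1 / (n:ℝ) : ℝ) : EReal) * supD0 (C n) ε) atTop := by
  refine le_iInf₂ fun ε hε => le_liminf_of_le (by isBoundedDefault) ?_
  filter_upwards [eventually_ge_atTop 1, he.eventually (eventually_lt_nhds hε)] with n hn hen
  obtain ⟨hM, hcode, hR⟩ := hcodes n hn
  have hconverse := logb_le_supD0_of_isCode (hC n) hM (hcode.mono hen.le)
  calc (R : EReal) ≤ ((1 / (n:ℝ) : ℝ) : EReal) * ((Real.logb 2 (M n) : ℝ) : EReal) := by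
        exact_mod_cast hR
    _ ≤ ((1 / (n:ℝ) : ℝ) : EReal) * supD0 (C n) ε :=
        mul_le_mul_of_nonneg_left hconverse (by exact_mod_cast (by positivity : (0:ℝ) ≤ 1 / n))
end
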